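/- (Lemma: variance of the sum estimator.) In the UBS sum sampling model, Var(Ĵ_sum) = ((1−q₂)/(p q₂))·β₁ + ((1−q₁)/(p q₁))·β₂ + ((1−q₁)(1−q₂)/(p q₁ q₂))·β₃ + ((1−p)/p)·β₄, where β₁ = Σ_v (a v)² μ_v² (b v), β₂ = Σ_v (a v)(μ_v² + σ_v²)(b v)², β₃ = Σ_v (a v)(μ_v² + σ_v²)(b v), and β₄ = Σ_v (a v)² μ_v² (b v)². -/

import Mathlib

open MeasureTheory ProbabilityTheory

/-- Mean `μ_v` of the weights attached to the tuples of the first table with join key `v`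
(`0` when there are no such tuples). -/
noncomputable def wMean {ι : Type*} (a : ι → ℕ) (w : (v : ι) → Fin (a v) → ℝ) (v : ι) : ℝ :=
  (∑ i, w v i) / (a v)

/-- Population variance `σ_v²` of the weights attached to the tuples of the first table with
join key `v` (`0` when there are no such tuples). -/
noncomputable def wVar {ι : Type*} (a : ι → ℕ) (w : (v : ι) → Fin (a v) → ℝ) (v : ι) : ℝ :=
  (∑ i, (w v i - wMean a w v) ^ 2) / (a v)

/-!
Write `Ĵ_sum = (p q₁ q₂)⁻¹ ∑ᵥ Xᵥ` with `Xᵥ = Uᵥ Aᵥ Bᵥ`, `Aᵥ = ∑ᵢ ξᵥᵢ wᵥᵢ`, `Bᵥ = ∑ⱼ ηᵥⱼ`.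
The indicators of distinct keys form disjoint blocks of the independent family, so the `Xᵥ` are
independent and `Var Ĵ_sum = (p q₁ q₂)⁻² ∑ᵥ Var Xᵥ`. Inside one key, `Uᵥ`, `Aᵥ`, `Bᵥ` are again
independent, and for independent `X`, `Y` one has
`Var (X Y) = (Var X + (E X)²) (Var Y + (E Y)²) - (E X E Y)²`.
Sums of independent Bernoulli variables give `E Aᵥ = q₁ ∑ᵢ wᵥᵢ = q₁ aᵥ μᵥ`,
`Var Aᵥ = q₁ (1 - q₁) ∑ᵢ wᵥᵢ² = q₁ (1 - q₁) aᵥ (μᵥ² + σᵥ²)`, `E Bᵥ = q₂ bᵥ` and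
`Var Bᵥ = q₂ (1 - q₂) bᵥ`; expanding yields the four `β`-terms.
-/

open scoped ENNReal

theorem measurable_iSup_comap_of_mem {Ω κ β : Type*} [mβ : MeasurableSpace β] {f : κ → Ω → β}
    {S : Set κ} {k : κ} (hk : k ∈ S) : Measurable[⨆ k ∈ S, mβ.comap (f k)] (f k) :=
  (comap_measurable (f k)).mono (le_iSup₂ (f := fun k (_ : k ∈ S) => mβ.comap (f k)) k hk) le_rfl

namespace ProbabilityTheory

variable {Ω : Type*} [MeasurableSpace Ω] {μ : Measure Ω}

theorem iIndepFun.indepFun_of_measurable_iSup {κ β γ δ : Type*} [mβ : MeasurableSpace β]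
    [MeasurableSpace γ] [MeasurableSpace δ] {f : κ → Ω → β} (hf : iIndepFun f μ)
    (hfm : ∀ k, Measurable (f k)) {S T : Set κ} (hST : Disjoint S T) {X : Ω → γ} {Y : Ω → δ}
    (hX : Measurable[⨆ k ∈ S, mβ.comap (f k)] X) (hY : Measurable[⨆ k ∈ T, mβ.comap (f k)] Y) :
    IndepFun X Y μ :=
  (IndepFun_iff_Indep X Y μ).2 <| indep_of_indep_of_le
    (indep_iSup_of_disjoint (fun k => (hfm k).comap_le) hf.iIndep hST) hX.comap_le hY.comap_le

section Product

variable {X Y : Ω → ℝ}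

theorem IndepFun.sq (h : IndepFun X Y μ) : IndepFun (X ^ 2) (Y ^ 2) μ := by
  exact h.comp (φ := fun x : ℝ => x ^ 2) (ψ := fun x : ℝ => x ^ 2) (by fun_prop) (by fun_prop)

theorem IndepFun.memLp_two_mul (h : IndepFun X Y μ) (hX : MemLp X 2 μ) (hY : MemLp Y 2 μ) :
    MemLp (X * Y) 2 μ := by
  rw [memLp_two_iff_integrable_sq (hX.aestronglyMeasurable.mul hY.aestronglyMeasurable)]
  simp only [Pi.mul_apply, mul_pow]
  exact h.sq.integrable_mul hX.integrable_sq hY.integrable_sq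

variable [IsProbabilityMeasure μ]

theorem integral_sq_eq_variance_add_sq (hX : MemLp X 2 μ) : μ[X ^ 2] = Var[X; μ] + μ[X] ^ 2 := by
  rw [variance_eq_sub hX]; ring

theorem IndepFun.variance_fun_mul (h : IndepFun X Y μ) (hX : MemLp X 2 μ) (hY : MemLp Y 2 μ) :
    Var[fun ω => X ω * Y ω; μ] =
      (Var[X; μ] + μ[X] ^ 2) * (Var[Y; μ] + μ[Y] ^ 2) - (μ[X] * μ[Y]) ^ 2 := by
  change Var[X * Y; μ] = _
  rw [variance_eq_sub (h.memLp_two_mul hX hY), mul_pow,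
    h.sq.integral_mul_eq_mul_integral (hX.aestronglyMeasurable.pow 2)
      (hY.aestronglyMeasurable.pow 2),
    h.integral_mul_eq_mul_integral hX.aestronglyMeasurable hY.aestronglyMeasurable,
    integral_sq_eq_variance_add_sq hX, integral_sq_eq_variance_add_sq hY]

end Product

structure IsBernoulli (X : Ω → ℝ) (r : ℝ) (μ : Measure Ω) : Prop where
  measurable : Measurable X
  zero_or_one : ∀ ω, X ω = 0 ∨ X ω = 1
  measure_eq_one : μ {ω | X ω = 1} = ENNReal.ofReal r

namespace IsBernoulli

variable {X : Ω → ℝ} {r : ℝ}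

theorem eq_indicator (h : IsBernoulli X r μ) : X = {ω | X ω = 1}.indicator 1 :=
  funext fun ω => by rcases h.zero_or_one ω with h | h <;> simp [h]

theorem sq_eq (h : IsBernoulli X r μ) : X ^ 2 = X :=
  funext fun ω => by rcases h.zero_or_one ω with h | h <;> simp [h]

theorem memLp [IsFiniteMeasure μ] (h : IsBernoulli X r μ) (p : ℝ≥0∞) : MemLp X p μ :=
  memLp_of_bounded (a := 0) (b := 1)
    (.of_forall fun ω => by rcases h.zero_or_one ω with h | h <;> simp [h])
    h.measurable.aestronglyMeasurable p

theorem integral_eq (h : IsBernoulli X r μ) (hr : 0 ≤ r) : μ[X] = r := by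
  rw [h.eq_indicator,
    integral_indicator_one (s := {ω | X ω = 1}) (h.measurable (measurableSet_singleton 1)),
    measureReal_def, h.measure_eq_one, ENNReal.toReal_ofReal hr]

theorem variance_eq [IsProbabilityMeasure μ] (h : IsBernoulli X r μ) (hr : 0 ≤ r) :
    Var[X; μ] = r * (1 - r) := by
  rw [variance_eq_sub (h.memLp 2), h.sq_eq, h.integral_eq hr]
  ring

end IsBernoulli

section WeightedSum

variable {κ : Type*} [Fintype κ] {ξ : κ → Ω → ℝ} {q : ℝ}

theorem memLp_sum_mul_of_isBernoulli [IsFiniteMeasure μ] (hξ : ∀ i, IsBernoulli (ξ i) q μ)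
    (w : κ → ℝ) (p : ℝ≥0∞) : MemLp (fun ω => ∑ i, ξ i ω * w i) p μ :=
  memLp_finsetSum _ fun i _ => ((hξ i).memLp p).mul_const (w i)

theorem memLp_sum_of_isBernoulli [IsFiniteMeasure μ] (hξ : ∀ i, IsBernoulli (ξ i) q μ)
    (p : ℝ≥0∞) : MemLp (fun ω => ∑ i, ξ i ω) p μ :=
  memLp_finsetSum _ fun i _ => (hξ i).memLp p

theorem integral_sum_mul_of_isBernoulli [IsFiniteMeasure μ] (hξ : ∀ i, IsBernoulli (ξ i) q μ)
    (hq : 0 ≤ q) (w : κ → ℝ) : ∫ ω, ∑ i, ξ i ω * w i ∂μ = q * ∑ i, w i := by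
  rw [integral_finsetSum _ fun i _ => (((hξ i).memLp 1).integrable le_rfl).mul_const (w i),
    Finset.mul_sum]
  exact Finset.sum_congr rfl fun i _ => by rw [integral_mul_const, (hξ i).integral_eq hq]

theorem integral_sum_of_isBernoulli [IsFiniteMeasure μ] (hξ : ∀ i, IsBernoulli (ξ i) q μ)
    (hq : 0 ≤ q) : ∫ ω, ∑ i, ξ i ω ∂μ = q * Fintype.card κ := by
  simpa using integral_sum_mul_of_isBernoulli hξ hq 1

theorem variance_sum_mul_of_isBernoulli [IsProbabilityMeasure μ]
    (hξ : ∀ i, IsBernoulli (ξ i) q μ) (hq : 0 ≤ q)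
    (hind : Pairwise fun i j => IndepFun (ξ i) (ξ j) μ) (w : κ → ℝ) :
    Var[fun ω => ∑ i, ξ i ω * w i; μ] = q * (1 - q) * ∑ i, w i ^ 2 := by
  have hsum : (fun ω => ∑ i, ξ i ω * w i) = ∑ i, fun ω => ξ i ω * w i := by
    ext ω; simp
  rw [hsum, IndepFun.variance_sum (fun i _ => ((hξ i).memLp 2).mul_const (w i))
    fun i _ j _ hij => by
      exact (hind hij).comp (φ := (· * w i)) (ψ := (· * w j)) (by fun_prop) (by fun_prop),
    Finset.mul_sum]
  exact Finset.sum_congr rfl fun i _ => by rw [variance_mul_const, (hξ i).variance_eq hq]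

theorem variance_sum_of_isBernoulli [IsProbabilityMeasure μ]
    (hξ : ∀ i, IsBernoulli (ξ i) q μ) (hq : 0 ≤ q)
    (hind : Pairwise fun i j => IndepFun (ξ i) (ξ j) μ) :
    Var[fun ω => ∑ i, ξ i ω; μ] = q * (1 - q) * Fintype.card κ := by
  simpa using variance_sum_mul_of_isBernoulli hξ hq hind 1

end WeightedSum

theorem memLp_mul_sum_mul_sum_of_isBernoulli [IsFiniteMeasure μ]
    {κ₁ κ₂ : Type*} [Fintype κ₁] [Fintype κ₂] {U : Ω → ℝ} {ξ : κ₁ → Ω → ℝ} {η : κ₂ → Ω → ℝ}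
    {p q₁ q₂ : ℝ} (hU : IsBernoulli U p μ) (hξ : ∀ i, IsBernoulli (ξ i) q₁ μ)
    (hη : ∀ j, IsBernoulli (η j) q₂ μ) (w : κ₁ → ℝ) (r : ℝ≥0∞) :
    MemLp (fun ω => U ω * (∑ i, ξ i ω * w i) * ∑ j, η j ω) r μ :=
  (memLp_sum_of_isBernoulli hη r).mul'
    ((memLp_sum_mul_of_isBernoulli hξ w ⊤).mul' (r := ⊤) (hU.memLp ⊤))

theorem variance_mul_sum_mul_sum_of_isBernoulli [IsProbabilityMeasure μ]
    {κ₁ κ₂ : Type*} [Fintype κ₁] [Fintype κ₂] {U : Ω → ℝ} {ξ : κ₁ → Ω → ℝ} {η : κ₂ → Ω → ℝ}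
    {p q₁ q₂ : ℝ} (hU : IsBernoulli U p μ) (hξ : ∀ i, IsBernoulli (ξ i) q₁ μ)
    (hη : ∀ j, IsBernoulli (η j) q₂ μ) (hp : 0 ≤ p) (hq₁ : 0 ≤ q₁) (hq₂ : 0 ≤ q₂)
    (hξind : Pairwise fun i j => IndepFun (ξ i) (ξ j) μ)
    (hηind : Pairwise fun i j => IndepFun (η i) (η j) μ) (w : κ₁ → ℝ)
    (hU_ξη : IndepFun U (fun ω => (∑ i, ξ i ω * w i) * ∑ j, η j ω) μ)
    (hξ_η : IndepFun (fun ω => ∑ i, ξ i ω * w i) (fun ω => ∑ j, η j ω) μ) :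
    Var[fun ω => U ω * (∑ i, ξ i ω * w i) * ∑ j, η j ω; μ] =
      p * (q₁ * (1 - q₁) * ∑ i, w i ^ 2 + (q₁ * ∑ i, w i) ^ 2)
        * (q₂ * (1 - q₂) * Fintype.card κ₂ + (q₂ * Fintype.card κ₂) ^ 2)
      - (p * (q₁ * ∑ i, w i) * (q₂ * Fintype.card κ₂)) ^ 2 := by
  have hA := memLp_sum_mul_of_isBernoulli hξ w 2
  have hB := memLp_sum_of_isBernoulli hη 2
  have hAB :
      ∫ ω, (∑ i, ξ i ω * w i) * ∑ j, η j ω ∂μ = (q₁ * ∑ i, w i) * (q₂ * Fintype.card κ₂) := by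
    rw [hξ_η.integral_fun_mul_eq_mul_integral hA.aestronglyMeasurable hB.aestronglyMeasurable,
      integral_sum_mul_of_isBernoulli hξ hq₁, integral_sum_of_isBernoulli hη hq₂]
  simp only [mul_assoc]
  rw [hU_ξη.variance_fun_mul (hU.memLp 2) (hξ_η.memLp_two_mul hA hB), hξ_η.variance_fun_mul hA hB,
    hAB, hU.variance_eq hp, hU.integral_eq hp,
    variance_sum_mul_of_isBernoulli hξ hq₁ hξind, variance_sum_of_isBernoulli hη hq₂ hηind,
    integral_sum_mul_of_isBernoulli hξ hq₁, integral_sum_of_isBernoulli hη hq₂]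
  ring

section UBSModel

variable {Ω ι : Type*} {κ₁ κ₂ : ι → Type*}

def ubsFamily (U : ι → Ω → ℝ) (ξ : (v : ι) → κ₁ v → Ω → ℝ) (η : (v : ι) → κ₂ v → Ω → ℝ) :
    ι ⊕ ((Σ v, κ₁ v) ⊕ (Σ v, κ₂ v)) → Ω → ℝ :=
  Sum.elim U (Sum.elim (fun vi => ξ vi.1 vi.2) (fun vj => η vj.1 vj.2))

def ubsKey : ι ⊕ ((Σ v, κ₁ v) ⊕ (Σ v, κ₂ v)) → ι :=
  Sum.elim id (Sum.elim Sigma.fst Sigma.fst)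

variable {U : ι → Ω → ℝ} {ξ : (v : ι) → κ₁ v → Ω → ℝ} {η : (v : ι) → κ₂ v → Ω → ℝ}
  {S : Set (ι ⊕ ((Σ v, κ₁ v) ⊕ (Σ v, κ₂ v)))} {v : ι}

local notation "σ[" S "]" => ⨆ k ∈ S, Real.measurableSpace.comap (ubsFamily U ξ η k)

theorem measurable_ubsFamily_left (hv : Sum.inl v ∈ S) : Measurable[σ[S]] (U v) :=
  measurable_iSup_comap_of_mem (f := ubsFamily U ξ η) hv

theorem measurable_ubsFamily_sum_mul [Fintype (κ₁ v)] (hv : ∀ i, Sum.inr (Sum.inl ⟨v, i⟩) ∈ S)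
    (w : κ₁ v → ℝ) : Measurable[σ[S]] fun ω => ∑ i, ξ v i ω * w i :=
  Finset.measurable_sum _ fun i _ =>
    (measurable_iSup_comap_of_mem (f := ubsFamily U ξ η) (hv i)).mul_const (w i)

theorem measurable_ubsFamily_sum [Fintype (κ₂ v)] (hv : ∀ j, Sum.inr (Sum.inr ⟨v, j⟩) ∈ S) :
    Measurable[σ[S]] fun ω => ∑ j, η v j ω :=
  Finset.measurable_sum _ fun j _ => measurable_iSup_comap_of_mem (f := ubsFamily U ξ η) (hv j)

variable [MeasurableSpace Ω] {μ : Measure Ω} [∀ v, Fintype (κ₁ v)] [∀ v, Fintype (κ₂ v)]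

theorem iIndepFun.indepFun_ubsFamily_summand (hind : iIndepFun (ubsFamily U ξ η) μ)
    (hm : ∀ k, Measurable (ubsFamily U ξ η k)) (w : (v : ι) → κ₁ v → ℝ) {v v' : ι} (hvv' : v ≠ v') :
    IndepFun (fun ω => U v ω * (∑ i, ξ v i ω * w v i) * ∑ j, η v j ω)
      (fun ω => U v' ω * (∑ i, ξ v' i ω * w v' i) * ∑ j, η v' j ω) μ := by
  have hdisj : Disjoint (ubsKey (κ₁ := κ₁) (κ₂ := κ₂) ⁻¹' {v}) (ubsKey ⁻¹' {v'}) :=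
    (Set.disjoint_singleton.2 hvv').preimage _
  have hblock (u : ι) : Measurable[σ[ubsKey ⁻¹' {u}]]
      fun ω => U u ω * (∑ i, ξ u i ω * w u i) * ∑ j, η u j ω :=
    ((measurable_ubsFamily_left (by simp [ubsKey])).mul
      (measurable_ubsFamily_sum_mul (fun _ => by simp [ubsKey]) _)).mul
      (measurable_ubsFamily_sum fun _ => by simp [ubsKey])
  exact hind.indepFun_of_measurable_iSup hm hdisj (hblock v) (hblock v')

theorem iIndepFun.indepFun_ubsFamily_left_sum_mul_sum (hind : iIndepFun (ubsFamily U ξ η) μ)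
    (hm : ∀ k, Measurable (ubsFamily U ξ η k)) (w : κ₁ v → ℝ) :
    IndepFun (U v) (fun ω => (∑ i, ξ v i ω * w i) * ∑ j, η v j ω) μ :=
  hind.indepFun_of_measurable_iSup (S := {Sum.inl v}) (T := {Sum.inl v}ᶜ) hm disjoint_compl_right
    (measurable_ubsFamily_left rfl)
    ((measurable_ubsFamily_sum_mul (fun _ => by simp) w).mul
      (measurable_ubsFamily_sum fun _ => by simp))

theorem iIndepFun.indepFun_ubsFamily_sum_sum (hind : iIndepFun (ubsFamily U ξ η) μ)
    (hm : ∀ k, Measurable (ubsFamily U ξ η k)) (w : κ₁ v → ℝ) :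
    IndepFun (fun ω => ∑ i, ξ v i ω * w i) (fun ω => ∑ j, η v j ω) μ := by
  have hdisj : Disjoint (Set.range fun vi : Σ v, κ₁ v => Sum.inr (Sum.inl vi))
      (Set.range fun vj : Σ v, κ₂ v => (Sum.inr (Sum.inr vj) : ι ⊕ ((Σ v, κ₁ v) ⊕ (Σ v, κ₂ v)))) :=
    Set.disjoint_left.2 <| by rintro _ ⟨_, rfl⟩ ⟨_, h⟩; simp at h
  exact hind.indepFun_of_measurable_iSup hm hdisj
    (measurable_ubsFamily_sum_mul (fun i => Set.mem_range_self (Sigma.mk v i)) w)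
    (measurable_ubsFamily_sum fun j => Set.mem_range_self (Sigma.mk v j))

end UBSModel

end ProbabilityTheory

theorem natCast_mul_wMean {ι : Type*} (a : ι → ℕ) (w : (v : ι) → Fin (a v) → ℝ) (v : ι) :
    (a v : ℝ) * wMean a w v = ∑ i, w v i := by
  rcases Nat.eq_zero_or_pos (a v) with h | h
  · have : IsEmpty (Fin (a v)) := by rw [h]; infer_instance
    simp [wMean, h]
  · rw [wMean]
    field_simp

theorem natCast_mul_wMean_sq_add_wVar {ι : Type*} (a : ι → ℕ) (w : (v : ι) → Fin (a v) → ℝ)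
    (v : ι) : (a v : ℝ) * (wMean a w v ^ 2 + wVar a w v) = ∑ i, w v i ^ 2 := by
  rcases Nat.eq_zero_or_pos (a v) with h | h
  · have : IsEmpty (Fin (a v)) := by rw [h]; infer_instance
    simp [wMean, wVar, h]
  · have hsum : ∑ i, (w v i - wMean a w v) ^ 2
        = ∑ i, w v i ^ 2 - 2 * wMean a w v * ∑ i, w v i + a v * wMean a w v ^ 2 := by
      simp only [sub_sq, Finset.sum_add_distrib, Finset.sum_sub_distrib, ← Finset.sum_mul,
        ← Finset.mul_sum, Finset.sum_const, Finset.card_univ, Fintype.card_fin, nsmul_eq_mul]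
      ring
    rw [wVar, hsum, ← natCast_mul_wMean]
    field_simp
    ring

theorem sum_estimator_variance_general
    {Ω : Type*} [MeasurableSpace Ω] (μ : Measure Ω) [IsProbabilityMeasure μ]
    {ι : Type*} [Fintype ι]
    (a b : ι → ℕ) (w : (v : ι) → Fin (a v) → ℝ) (p q₁ q₂ : ℝ)
    (hp : 0 < p) (hq₁ : 0 < q₁) (hq₂ : 0 < q₂)
    (U : ι → Ω → ℝ) (ξ : (v : ι) → Fin (a v) → Ω → ℝ) (η : (v : ι) → Fin (b v) → Ω → ℝ)
    (hUm : ∀ v, Measurable (U v))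
    (hξm : ∀ v i, Measurable (ξ v i))
    (hηm : ∀ v j, Measurable (η v j))
    (hU01 : ∀ v ω, U v ω = 0 ∨ U v ω = 1)
    (hξ01 : ∀ v i ω, ξ v i ω = 0 ∨ ξ v i ω = 1)
    (hη01 : ∀ v j ω, η v j ω = 0 ∨ η v j ω = 1)
    (hUp : ∀ v, μ {ω | U v ω = 1} = ENNReal.ofReal p)
    (hξq : ∀ v i, μ {ω | ξ v i ω = 1} = ENNReal.ofReal q₁)
    (hηq : ∀ v j, μ {ω | η v j ω = 1} = ENNReal.ofReal q₂)
    (hIndep : iIndepFun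
      (Sum.elim (fun v : ι => U v)
        (Sum.elim (fun vi : Σ v : ι, Fin (a v) => ξ vi.1 vi.2)
                  (fun vj : Σ v : ι, Fin (b v) => η vj.1 vj.2))) μ) :
    variance (fun ω => (1 / (p * q₁ * q₂)) *
        ∑ v, U v ω * (∑ i, ξ v i ω * w v i) * (∑ j, η v j ω)) μ
      = ((1 - q₂) / (p * q₂)) *
          (∑ v, (a v : ℝ) ^ 2 * (wMean a w v) ^ 2 * (b v : ℝ))
        + ((1 - q₁) / (p * q₁)) *
          (∑ v, (a v : ℝ) * ((wMean a w v) ^ 2 + wVar a w v) * (b v : ℝ) ^ 2)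
        + ((1 - q₁) * (1 - q₂) / (p * q₁ * q₂)) *
          (∑ v, (a v : ℝ) * ((wMean a w v) ^ 2 + wVar a w v) * (b v : ℝ))
        + ((1 - p) / p) *
          (∑ v, (a v : ℝ) ^ 2 * (wMean a w v) ^ 2 * (b v : ℝ) ^ 2) := by
  have hm : ∀ k, Measurable (ubsFamily U ξ η k) := by
    rintro (v | ⟨v, i⟩ | ⟨v, j⟩)
    exacts [hUm v, hξm v i, hηm v j]
  have hU (v) : IsBernoulli (U v) p μ := ⟨hUm v, hU01 v, hUp v⟩
  have hξ (v i) : IsBernoulli (ξ v i) q₁ μ := ⟨hξm v i, hξ01 v i, hξq v i⟩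
  have hη (v j) : IsBernoulli (η v j) q₂ μ := ⟨hηm v j, hη01 v j, hηq v j⟩
  have hξind (v) : Pairwise fun i i' => IndepFun (ξ v i) (ξ v i') μ := fun i i' h =>
    hIndep.indepFun (i := .inr (.inl ⟨v, i⟩)) (j := .inr (.inl ⟨v, i'⟩)) (by simpa using h)
  have hηind (v) : Pairwise fun j j' => IndepFun (η v j) (η v j') μ := fun j j' h =>
    hIndep.indepFun (i := .inr (.inr ⟨v, j⟩)) (j := .inr (.inr ⟨v, j'⟩)) (by simpa using h)
  have hvar (v) := variance_mul_sum_mul_sum_of_isBernoulli (hU v) (hξ v) (hη v) hp.le hq₁.le hq₂.le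
    (hξind v) (hηind v) (w v) (hIndep.indepFun_ubsFamily_left_sum_mul_sum hm (w v))
    (hIndep.indepFun_ubsFamily_sum_sum hm (w v))
  rw [variance_const_mul, ← Finset.sum_fn, IndepFun.variance_sum
    (fun v _ => memLp_mul_sum_mul_sum_of_isBernoulli (hU v) (hξ v) (hη v) (w v) 2)
      fun v _ v' _ hvv' => hIndep.indepFun_ubsFamily_summand hm w hvv',
    Finset.sum_congr rfl fun v _ => hvar v]
  simp only [Fintype.card_fin, ← natCast_mul_wMean, ← natCast_mul_wMean_sq_add_wVar,
    Finset.mul_sum, ← Finset.sum_add_distrib]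
  refine Finset.sum_congr rfl fun v _ => ?_
  field_simp
  ring

/-- **Variance of the UBS sum estimator.**  In the UBS sum sampling model,
`Var(Ĵ_sum) = ((1−q₂)/(p q₂))·β₁ + ((1−q₁)/(p q₁))·β₂ + ((1−q₁)(1−q₂)/(p q₁ q₂))·β₃
+ ((1−p)/p)·β₄`, where `β₁ = ∑ a_v² μ_v² b_v`, `β₂ = ∑ a_v (μ_v² + σ_v²) b_v²`,
`β₃ = ∑ a_v (μ_v² + σ_v²) b_v` and `β₄ = ∑ a_v² μ_v² b_v²`. -/
theorem sum_estimator_variance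
    {Ω : Type*} [MeasurableSpace Ω] (μ : Measure Ω) [IsProbabilityMeasure μ]
    {ι : Type*} [Fintype ι]
    (a b : ι → ℕ) (w : (v : ι) → Fin (a v) → ℝ) (p q₁ q₂ : ℝ)
    (hp : 0 < p) (hp1 : p ≤ 1) (hq₁ : 0 < q₁) (hq₁1 : q₁ ≤ 1) (hq₂ : 0 < q₂) (hq₂1 : q₂ ≤ 1)
    (U : ι → Ω → ℝ) (ξ : (v : ι) → Fin (a v) → Ω → ℝ) (η : (v : ι) → Fin (b v) → Ω → ℝ)
    (hUm : ∀ v, Measurable (U v))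
    (hξm : ∀ v i, Measurable (ξ v i))
    (hηm : ∀ v j, Measurable (η v j))
    (hU01 : ∀ v ω, U v ω = 0 ∨ U v ω = 1)
    (hξ01 : ∀ v i ω, ξ v i ω = 0 ∨ ξ v i ω = 1)
    (hη01 : ∀ v j ω, η v j ω = 0 ∨ η v j ω = 1)
    (hUp : ∀ v, μ {ω | U v ω = 1} = ENNReal.ofReal p)
    (hξq : ∀ v i, μ {ω | ξ v i ω = 1} = ENNReal.ofReal q₁)
    (hηq : ∀ v j, μ {ω | η v j ω = 1} = ENNReal.ofReal q₂)
    (hIndep : iIndepFun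
      (Sum.elim (fun v : ι => U v)
        (Sum.elim (fun vi : Σ v : ι, Fin (a v) => ξ vi.1 vi.2)
                  (fun vj : Σ v : ι, Fin (b v) => η vj.1 vj.2))) μ) :
    variance (fun ω => (1 / (p * q₁ * q₂)) *
        ∑ v, U v ω * (∑ i, ξ v i ω * w v i) * (∑ j, η v j ω)) μ
      = ((1 - q₂) / (p * q₂)) *
          (∑ v, (a v : ℝ) ^ 2 * (wMean a w v) ^ 2 * (b v : ℝ))
        + ((1 - q₁) / (p * q₁)) *
          (∑ v, (a v : ℝ) * ((wMean a w v) ^ 2 + wVar a w v) * (b v : ℝ) ^ 2)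
        + ((1 - q₁) * (1 - q₂) / (p * q₁ * q₂)) *
          (∑ v, (a v : ℝ) * ((wMean a w v) ^ 2 + wVar a w v) * (b v : ℝ))
        + ((1 - p) / p) *
          (∑ v, (a v : ℝ) ^ 2 * (wMean a w v) ^ 2 * (b v : ℝ) ^ 2) :=
  sum_estimator_variance_general μ a b w p q₁ q₂ hp hq₁ hq₂ U ξ η hUm hξm hηm hU01 hξ01 hη01 hUp hξq
    hηq hIndep
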